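/- Let V(s) = e^{−3Hs} √(det g(s)) where g(s) is a C¹ family of positive-definite matrices satisfying ∂_s g = 2 Φ g k with Φ tr_g k := Φ g^{ij} k_{ij} satisfying |Φ tr_g k − 3H| ≤ C e^{−Hs}. Then ∂_s V = (Φ tr_g k − 3H) V, and consequently V(s)/V(s0) ∈ [e^{−(C/H) e^{−Hs0}}, e^{(C/H) e^{−Hs0}}] for all s ≥ s0; in particular V is bounded above and below by positive constants uniformly in s. -/

import Mathlib

/-!
By Jacobi's formula, `∂ₛ det g = det g · tr(g⁻¹ ∂ₛ g) = 2 Φ tr_g k · det g`, so `√(det g)` grows at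
the rate `Φ tr_g k` and `log V` has derivative `Φ tr_g k - 3H`. This derivative is bounded by
`C e^{-Hs}`, whose integral over `[s₀, ∞)` is `(C/H) e^{-Hs₀}`; exponentiating the resulting bound
on `log V(s) - log V(s₀)` gives the two-sided estimate for `V(s) / V(s₀)`.
-/
open Real Set Finset

namespace Matrix

variable {n : Type*} [Fintype n]

theorem IsSymm.trace_mul_eq_sum {R : Type*} [CommRing R] {B : Matrix n n R} (hB : B.IsSymm)
    (M : Matrix n n R) : (B * M).trace = ∑ i, ∑ j, B i j * M i j := by
  simp only [trace, diag, mul_apply]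
  rw [sum_comm]
  exact sum_congr rfl fun i _ => sum_congr rfl fun j _ => by rw [IsSymm.ext_iff.mp hB i j]

variable [DecidableEq n]

theorem det_updateCol_eq_sum_perm {R : Type*} [CommRing R] (A : Matrix n n R) (i : n)
    (c : n → R) :
    (A.updateCol i c).det =
      ∑ σ : Equiv.Perm n, (Equiv.Perm.sign σ : R) * ((∏ j ∈ univ.erase i, A (σ j) j) * c (σ i)) := by
  rw [det_apply']
  refine sum_congr rfl fun σ _ => congrArg _ ?_
  rw [← mul_prod_erase univ _ (mem_univ i), updateCol_self, mul_comm]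
  congr 1
  exact prod_congr rfl fun j hj => updateCol_ne (ne_of_mem_erase hj)

theorem adjugate_eq_det_smul_of_mul_eq_one {R : Type*} [CommRing R] {A B : Matrix n n R}
    (h : A * B = 1) : A.adjugate = A.det • B := by
  calc A.adjugate = (B * A) * A.adjugate := by rw [mul_eq_one_comm.mp h, one_mul]
    _ = A.det • B := by rw [Matrix.mul_assoc, mul_adjugate, mul_smul_comm, Matrix.mul_one]

variable {𝕜 : Type*} [NontriviallyNormedField 𝕜] {A : 𝕜 → Matrix n n 𝕜} {A' : Matrix n n 𝕜}
  {s : 𝕜}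

theorem hasDerivAt_det (hA : ∀ i j, HasDerivAt (fun τ => A τ i j) (A' i j) s) :
    HasDerivAt (fun τ => (A τ).det) ((A s).adjugate * A').trace s := by
  simp_rw [det_apply']
  have hterm (σ : Equiv.Perm n) := (HasDerivAt.fun_finsetProd (u := univ)
    fun i _ => hA (σ i) i).const_mul (Equiv.Perm.sign σ : 𝕜)
  refine (HasDerivAt.fun_sum (u := univ) fun σ _ => hterm σ).congr_deriv ?_
  have hcol (i : n) : ((A s).adjugate * A') i i = ((A s).updateCol i fun k => A' k i).det := by
    rw [← cramer_apply, cramer_eq_adjugate_mulVec]; rfl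
  simp only [trace, diag, hcol, det_updateCol_eq_sum_perm, smul_eq_mul]
  rw [sum_comm]
  simp only [mul_sum]

theorem hasDerivAt_det_of_mul_eq_one {B : Matrix n n 𝕜} (hB : A s * B = 1)
    (hA : ∀ i j, HasDerivAt (fun τ => A τ i j) (A' i j) s) :
    HasDerivAt (fun τ => (A τ).det) ((A s).det * (B * A').trace) s := by
  simpa [adjugate_eq_det_smul_of_mul_eq_one hB, smul_mul_assoc, trace_smul] using
    hasDerivAt_det hA

end Matrix

theorem hasDerivAt_sqrt_det {n : Type*} [Fintype n] [DecidableEq n]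
    {g k : ℝ → Matrix n n ℝ} {ginv : Matrix n n ℝ} {Φ : ℝ → ℝ} {s : ℝ}
    (hpos : (g s).PosDef) (hinv : g s * ginv = 1)
    (hderiv : ∀ i j, HasDerivAt (fun τ => g τ i j) (2 * Φ s * k s i j) s) :
    HasDerivAt (fun τ => √(g τ).det)
      (Φ s * (∑ i, ∑ j, ginv i j * k s i j) * √(g s).det) s := by
  have hdet_pos : 0 < (g s).det := hpos.det_pos
  have hsymm : ginv.IsSymm := by
    rw [← Matrix.inv_eq_right_inv hinv]
    exact (Matrix.isHermitian_iff_isSymm.mp hpos.1).inv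
  have hjac := Matrix.hasDerivAt_det_of_mul_eq_one (A' := (2 * Φ s) • k s) hinv
    fun i j => by simpa only [Matrix.smul_apply, smul_eq_mul] using hderiv i j
  rw [Matrix.mul_smul, Matrix.trace_smul, hsymm.trace_mul_eq_sum, smul_eq_mul] at hjac
  refine (hjac.sqrt hdet_pos.ne').congr_deriv ?_
  field_simp
  rw [sq_sqrt hdet_pos.le]
  ring

theorem abs_sub_le_of_abs_hasDerivAt_le {u u' w w' : ℝ → ℝ}
    (hu : ∀ t, HasDerivAt u (u' t) t) (hw : ∀ t, HasDerivAt w (w' t) t)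
    (hbound : ∀ t, |u' t| ≤ w' t) {a b : ℝ} (hab : a ≤ b) :
    |u b - u a| ≤ w b - w a := by
  have hplus : Monotone (w + u) := monotone_of_hasDerivAt_nonneg (fun t => (hw t).add (hu t))
    fun t => neg_le_iff_add_nonneg'.mp (neg_le_of_abs_le (hbound t))
  have hminus : Monotone (w - u) := monotone_of_hasDerivAt_nonneg (fun t => (hw t).sub (hu t))
    fun t => sub_nonneg.mpr (le_of_abs_le (hbound t))
  have h1 := hplus hab
  have h2 := hminus hab
  simp only [Pi.add_apply, Pi.sub_apply] at h1 h2
  rw [abs_le]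
  constructor <;> linarith

theorem div_mem_Icc_exp_of_abs_log_sub_le {x y r : ℝ} (hx : 0 < x) (hy : 0 < y)
    (h : |log x - log y| ≤ r) : x / y ∈ Icc (exp (-r)) (exp r) := by
  rw [← exp_log hx, ← exp_log hy, ← exp_sub]
  exact ⟨exp_le_exp.mpr (neg_le_of_abs_le h), exp_le_exp.mpr (le_of_abs_le h)⟩

/-- Renormalized volume form estimate: with `V(s) = e^{-3Hs} √(det g(s))`,
`∂_s g_{ij} = 2Φ k_{ij}` and `|Φ tr_g k - 3H| ≤ C e^{-Hs}`, one has
`∂_s V = (Φ tr_g k - 3H) V`, and hence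
`V(s)/V(s0) ∈ [e^{-(C/H) e^{-Hs0}}, e^{(C/H) e^{-Hs0}}]` for `s ≥ s0`;
in particular `V` is uniformly bounded above and below. -/
theorem stmt_17 (H C s0 : ℝ) (hH : 0 < H)
    (g k ginv : ℝ → Matrix (Fin 3) (Fin 3) ℝ) (Φ : ℝ → ℝ)
    (hpos : ∀ s, (g s).PosDef)
    (hinv : ∀ s, g s * ginv s = 1)
    (hderiv : ∀ s i j, HasDerivAt (fun τ => g τ i j) (2 * Φ s * k s i j) s)
    (htr : ∀ s, |Φ s * (∑ i, ∑ j, ginv s i j * k s i j) - 3 * H|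
      ≤ C * exp (-H * s)) :
    (∀ s, HasDerivAt (fun τ => exp (-3 * H * τ) * Real.sqrt (g τ).det)
      ((Φ s * (∑ i, ∑ j, ginv s i j * k s i j) - 3 * H)
        * (exp (-3 * H * s) * Real.sqrt (g s).det)) s) ∧
    (∀ s ≥ s0,
      (exp (-3 * H * s) * Real.sqrt (g s).det)
          / (exp (-3 * H * s0) * Real.sqrt (g s0).det)
        ∈ Icc (exp (-(C / H) * exp (-H * s0))) (exp ((C / H) * exp (-H * s0)))) := by
  set V : ℝ → ℝ := fun τ => exp (-3 * H * τ) * √(g τ).det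
  set trk : ℝ → ℝ := fun τ => Φ τ * ∑ i, ∑ j, ginv τ i j * k τ i j
  have hV_pos (s : ℝ) : 0 < V s := mul_pos (exp_pos _) (sqrt_pos.mpr (hpos s).det_pos)
  have hV (s : ℝ) : HasDerivAt V ((trk s - 3 * H) * V s) s := by
    have hexp := ((hasDerivAt_id s).const_mul (-3 * H)).exp
    refine (hexp.mul (hasDerivAt_sqrt_det (hpos s) (hinv s) (hderiv s))).congr_deriv ?_
    simp only [V, trk, id]
    ring
  refine ⟨hV, fun s hs => ?_⟩
  have hlogV (t : ℝ) : HasDerivAt (fun τ => log (V τ)) (trk t - 3 * H) t := by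
    simpa [(hV_pos t).ne'] using (hV t).log (hV_pos t).ne'
  have hw (t : ℝ) : HasDerivAt (fun τ => -(C / H) * exp (-H * τ)) (C * exp (-H * t)) t := by
    refine (((hasDerivAt_id t).const_mul (-H)).exp.const_mul (-(C / H))).congr_deriv ?_
    simp only [id]
    field_simp
  have hC : 0 ≤ C := nonneg_of_mul_nonneg_left ((abs_nonneg _).trans (htr 0)) (exp_pos _)
  have hlog := abs_sub_le_of_abs_hasDerivAt_le hlogV hw htr hs
  rw [neg_mul]
  refine div_mem_Icc_exp_of_abs_log_sub_le (hV_pos s) (hV_pos s0) (hlog.trans ?_)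
  have : 0 ≤ C / H * exp (-H * s) := by positivity
  linarith
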